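/- arXiv:2103.01018 — 3 statements merged into one kernel-verified Lean document; each statement's English description precedes it below -/
import Mathlib

section
/- Let N ≥ 1, K ≥ 1 be integers and 0 < P_n < P_s reals, and set ζ = (P_n − P_s)/(P_s P_n) < 0. Then for every p > 0, ∫_0^p [ t^{N-1} e^{-t/P_s} / (P_s^N Γ(N)) ] · [ (p−t)^{K-1} e^{-(p−t)/P_n} / (P_n^K Γ(K)) ] dt = [ Σ_{n=0}^{N-1} C(N−1, n) (−1)^n p^{N-1-n} e^{-p/P_s} γ(K+n, −ζ p) / (−ζ)^{K+n} ] / ( P_s^N P_n^K Γ(N) Γ(K) ). -/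
open MeasureTheory Real intervalIntegral

lemma aux_scale (m : ℕ) {c : ℝ} (hc : 0 < c) (p : ℝ) :
    ∫ s in (0:ℝ)..p, s ^ m * Real.exp (-(c * s)) =
      (∫ u in (0:ℝ)..(c * p), u ^ m * Real.exp (-u)) / c ^ (m + 1) := by
  have h := intervalIntegral.integral_comp_mul_left
      (fun u : ℝ => u ^ m * Real.exp (-u)) (a := 0) (b := p) (ne_of_gt hc)
  simp only [mul_zero, smul_eq_mul] at h
  have h2 : (∫ x in (0:ℝ)..p, (c*x)^m * Real.exp (-(c*x)))
      = c^m * ∫ x in (0:ℝ)..p, x^m * Real.exp (-(c*x)) := by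
    rw [← intervalIntegral.integral_const_mul]
    exact intervalIntegral.integral_congr fun x _ => by rw [mul_pow]; ring
  rw [h2] at h
  have hc0 : c ≠ 0 := ne_of_gt hc
  field_simp at h ⊢
  rw [pow_succ]
  nlinarith [h]

lemma aux_sub (m : ℕ) {Ps Pn : ℝ} (hPs : Ps ≠ 0) (hPn : Pn ≠ 0) (p : ℝ) :
    (∫ t in (0:ℝ)..p, (p - t) ^ m * (Real.exp (-(t / Ps)) * Real.exp (-((p - t) / Pn)))) =
      Real.exp (-(p / Ps)) *
        ∫ s in (0:ℝ)..p, s ^ m * Real.exp (-((1/Pn - 1/Ps) * s)) := by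
  have h := intervalIntegral.integral_comp_sub_left
      (fun s : ℝ => s ^ m * (Real.exp (-((p - s) / Ps)) * Real.exp (-(s / Pn)))) (a := 0) (b := p) p
  simp only [sub_zero, sub_self] at h
  rw [← intervalIntegral.integral_const_mul]
  rw [show (∫ t in (0:ℝ)..p, (p - t) ^ m * (Real.exp (-(t / Ps)) * Real.exp (-((p - t) / Pn)))) =
      ∫ t in (0:ℝ)..p, (p - t) ^ m * (Real.exp (-((p - (p - t)) / Ps)) * Real.exp (-((p - t) / Pn))) from
    intervalIntegral.integral_congr fun t _ => by rw [show p - (p - t) = t by ring]]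
  rw [h]
  refine intervalIntegral.integral_congr fun s _ => ?_
  rw [← Real.exp_add,
    show Real.exp (-(p/Ps)) * (s^m * Real.exp (-((1/Pn-1/Ps)*s))) =
      s^m * Real.exp (-(p/Ps) + -((1/Pn-1/Ps)*s)) by rw [Real.exp_add]; ring]
  congr 2
  field_simp
  ring

/-- The lower incomplete gamma function `γ(s, x) = ∫_0^x u^(s-1) e^(-u) du`. -/
noncomputable def lowerIncompleteGamma (s x : ℝ) : ℝ :=
  ∫ u in (0 : ℝ)..x, u ^ (s - 1) * Real.exp (-u)

/-- Density of the sum of independent Gamma(N, P_s) and Gamma(K, P_n) variables in the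
case `P_n < P_s` (Lemma 2, case `N/M < φ < 1`). -/
theorem gamma_density_convolution_Pn_lt_Ps
    (N K : ℕ) (hN : 1 ≤ N) (hK : 1 ≤ K) (Ps Pn : ℝ) (hPn : 0 < Pn) (hPnPs : Pn < Ps)
    (ζ : ℝ) (hζ : ζ = (Pn - Ps) / (Ps * Pn)) (p : ℝ) (hp : 0 < p) :
    ∫ t in (0 : ℝ)..p,
        (t ^ (N - 1) * Real.exp (-(t / Ps)) / (Ps ^ N * Real.Gamma (N : ℝ))) *
        ((p - t) ^ (K - 1) * Real.exp (-((p - t) / Pn)) / (Pn ^ K * Real.Gamma (K : ℝ))) =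
      (∑ n ∈ Finset.range N, ((N - 1).choose n : ℝ) * (-1 : ℝ) ^ n * p ^ (N - 1 - n) *
          Real.exp (-(p / Ps)) * lowerIncompleteGamma ((K : ℝ) + n) (-ζ * p) / (-ζ) ^ (K + n)) /
        (Ps ^ N * Pn ^ K * Real.Gamma (N : ℝ) * Real.Gamma (K : ℝ)) := by
  have hPs : 0 < Ps := hPn.trans hPnPs
  have hPs0 : Ps ≠ 0 := ne_of_gt hPs
  have hPn0 : Pn ≠ 0 := ne_of_gt hPn
  have hcpos : 0 < 1/Pn - 1/Ps := by
    have h1 : 1/Ps < 1/Pn := one_div_lt_one_div_of_lt hPn hPnPs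
    linarith
  have hc : -ζ = 1/Pn - 1/Ps := by
    rw [hζ, div_sub_div _ _ hPn0 hPs0, one_mul, mul_one, mul_comm Pn Ps, ← neg_div, neg_sub]
  -- Step 1: pull constants out
  rw [show (∫ t in (0 : ℝ)..p,
        (t ^ (N - 1) * Real.exp (-(t / Ps)) / (Ps ^ N * Real.Gamma (N : ℝ))) *
        ((p - t) ^ (K - 1) * Real.exp (-((p - t) / Pn)) / (Pn ^ K * Real.Gamma (K : ℝ)))) =
      (∫ t in (0:ℝ)..p, t ^ (N-1) * Real.exp (-(t / Ps)) *
          ((p - t) ^ (K-1) * Real.exp (-((p - t) / Pn)))) /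
        (Ps ^ N * Pn ^ K * Real.Gamma (N:ℝ) * Real.Gamma (K:ℝ)) from by
    rw [← intervalIntegral.integral_div]
    exact intervalIntegral.integral_congr fun t _ => by
      rw [div_mul_div_comm]; ring_nf]
  congr 1
  -- Step 2: binomial expansion of t^(N-1)
  have hbin : ∀ t : ℝ, t ^ (N-1) =
      ∑ n ∈ Finset.range N, (-1:ℝ)^n * (p-t)^n * p^(N-1-n) * ((N-1).choose n : ℝ) := by
    intro t
    have h := add_pow (-(p-t)) p (N-1)
    rw [Nat.sub_add_cancel hN] at h
    calc t ^ (N-1) = (-(p-t) + p)^(N-1) := by ring_nf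
    _ = _ := by
      rw [h]
      exact Finset.sum_congr rfl fun n _ => by rw [neg_pow]
  -- Step 3: swap sum and integral
  rw [show (∫ t in (0:ℝ)..p, t ^ (N-1) * Real.exp (-(t / Ps)) *
        ((p - t) ^ (K-1) * Real.exp (-((p - t) / Pn)))) =
      ∫ t in (0:ℝ)..p, ∑ n ∈ Finset.range N, ((N-1).choose n : ℝ) * (-1:ℝ)^n * p^(N-1-n) *
        ((p-t)^(K-1+n) * (Real.exp (-(t / Ps)) * Real.exp (-((p - t) / Pn)))) from
    intervalIntegral.integral_congr fun t _ => by
      rw [hbin t, Finset.sum_mul, Finset.sum_mul]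
      refine Finset.sum_congr rfl fun n _ => ?_
      rw [pow_add]
      ring]
  rw [intervalIntegral.integral_finset_sum (fun n _ =>
    ((by fun_prop : Continuous fun t : ℝ => ((N-1).choose n : ℝ) * (-1:ℝ)^n * p^(N-1-n) *
        ((p-t)^(K-1+n) * (Real.exp (-(t / Ps)) * Real.exp (-((p - t) / Pn)))))).intervalIntegrable 0 p)]
  refine Finset.sum_congr rfl fun n _ => ?_
  rw [intervalIntegral.integral_const_mul]
  -- Step 4: evaluate each inner integral
  rw [aux_sub (K-1+n) hPs0 hPn0 p, aux_scale (K-1+n) hcpos p]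
  have hexp : K - 1 + n + 1 = K + n := by omega
  have hlig : lowerIncompleteGamma ((K:ℝ) + n) (-ζ * p) =
      ∫ u in (0:ℝ)..((1/Pn - 1/Ps) * p), u ^ (K-1+n) * Real.exp (-u) := by
    rw [lowerIncompleteGamma, hc]
    refine intervalIntegral.integral_congr fun u _ => ?_
    rw [show (K:ℝ) + n - 1 = ((K-1+n : ℕ) : ℝ) by
      push_cast [Nat.cast_sub hK]; ring]
    rw [Real.rpow_natCast]
  rw [hlig, hc, hexp]
  ring
end

section
/- Let N ≥ 1 be an integer, M > N an integer, and 0 < P_s < P_n reals. Set ζ = (P_n − P_s)/(P_s P_n). Let X ~ Gamma(N, P_s) and Y ~ Gamma(M−N, P_n) be independent. Then for every real c > 0, setting τ_1 = P_s^{−1} + c and τ_2 = P_n^{−1} + c, E[ e^{-c(X+Y)} ] = Σ_{n=0}^{M-N-1} [ C(N+n−1, n) · P_n^{2N−M} / ( (−ζ)^n (P_n − P_s)^N ) ] · [ 1/τ_2^{M−N−n} − Σ_{m=0}^{N+n-1} C(M−N−n−1+m, m) ζ^m / τ_1^{M−N−n+m} ]. -/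
/-!
By independence, the Laplace transform of `X + Y` is the product of two Gamma Laplace transforms,
`(P_s⁻¹ / τ₁) ^ N * (P_n⁻¹ / τ₂) ^ (M - N)`, so everything reduces to a partial-fraction expansion
of `1 / (τ₁ ^ N * τ₂ ^ K)`, `K = M - N`, in powers of `ζ = τ₁ - τ₂`. The `n`-th bracket is the
remainder of the expansion of `τ₂ ^ (-(K - n)) = (τ₁ - ζ) ^ (-(K - n))` in powers of `ζ / τ₁`;
by the problem-of-points identity it equals `(ζ / τ₁) ^ (N + n) / τ₂ ^ (K - n)` times a polynomial in
`τ₂ / τ₁`. Collecting powers `(τ₂ / τ₁) ^ p`, the coefficient is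
`∑ n, (-1) ^ n * C(N - 1 + n, n) * C(N - 1 + p, p - n) = C(N - 1 + p, p) * (1 - 1) ^ p`,
so only `p = 0` survives.
-/

open MeasureTheory ProbabilityTheory Real Finset

theorem Nat.choose_mul_choose_add (ν n i : ℕ) :
    (ν + n).choose n * (ν + n + i).choose i = (ν + (n + i)).choose (n + i) * (n + i).choose n := by
  have h1 := Nat.choose_mul (n := ν + n + i) (k := n + i) (s := n) (by omega)
  have h2 := Nat.choose_mul (n := ν + n + i) (k := ν + n) (s := n) (by omega)
  rw [show ν + n + i - n = ν + i by omega, show n + i - n = i by omega] at h1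
  rw [show ν + n + i - n = ν + i by omega, show ν + n - n = ν by omega, Nat.choose_symm_add,
    Nat.choose_symm_add] at h2
  rw [← add_assoc, h1, ← h2, mul_comm]

section CommRing

variable {R : Type*} [CommRing R]

theorem one_sub_mul_sum_range_choose_mul_pow (l j : ℕ) (x : R) :
    (1 - x) * ∑ i ∈ range (j + 1), ((l + 1 + i).choose i : R) * x ^ i =
      ∑ i ∈ range (j + 1), ((l + i).choose i : R) * x ^ i -
        ((l + 1 + j).choose j : R) * x ^ (j + 1) := by
  induction j with
  | zero => simp
  | succ j ih =>
    rw [sum_range_succ _ (j + 1), sum_range_succ _ (j + 1), mul_add, ih,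
      show l + 1 + (j + 1) = l + 1 + j + 1 by ring, Nat.choose_succ_succ',
      show l + (j + 1) = l + 1 + j by ring]
    push_cast
    ring

/-- The problem of points: with success probability `x` and failure probability `y`, either
`j + 1` successes come before `l + 1` failures or the other way round. -/
theorem pow_mul_sum_choose_add_pow_mul_sum_choose {x y : R} (h : x + y = 1) (j l : ℕ) :
    x ^ (j + 1) * ∑ m ∈ range (l + 1), ((j + m).choose m : R) * y ^ m +
      y ^ (l + 1) * ∑ i ∈ range (j + 1), ((l + i).choose i : R) * x ^ i = 1 := by
  obtain rfl : y = 1 - x := by rw [← h]; ring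
  induction l with
  | zero => simp [mul_neg_geom_sum]
  | succ l ih =>
    have hsymm : (j + (l + 1)).choose (l + 1) = (l + 1 + j).choose j := by
      rw [add_comm, Nat.choose_symm_add]
    rw [sum_range_succ _ (l + 1), pow_succ (1 - x) (l + 1), mul_assoc,
      one_sub_mul_sum_range_choose_mul_pow, hsymm]
    linear_combination ih

theorem sum_range_sum_range_neg_one_pow_mul_choose_mul_choose (ν : ℕ) {K : ℕ} (hK : 0 < K)
    (x : R) :
    ∑ n ∈ range K, ∑ i ∈ range (K - n),
      (-1) ^ n * ((ν + n).choose n * (ν + n + i).choose i : ℕ) * x ^ (n + i) = 1 := by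
  have hdiag (p : ℕ) : ∑ n ∈ range (p + 1),
      (-1) ^ n * ((ν + n).choose n * (ν + n + (p - n)).choose (p - n) : ℕ) * x ^ (n + (p - n)) =
        ((ν + p).choose p : R) * x ^ p * (-1 + 1) ^ p := by
    rw [add_pow, mul_sum]
    refine sum_congr rfl fun n hn => ?_
    rw [Nat.choose_mul_choose_add, Nat.add_sub_cancel' (Nat.lt_succ_iff.mp (mem_range.mp hn))]
    push_cast
    ring
  obtain ⟨κ, rfl⟩ := Nat.exists_eq_add_of_lt hK
  rw [← sum_range_diag_flip, sum_congr rfl fun p _ => hdiag p, neg_add_cancel, sum_range_succ']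
  simp

end CommRing

section Field

variable {𝕜 : Type*} [Field 𝕜]

theorem one_div_pow_sub_sum_choose_mul_div_pow {a b : 𝕜} (ha : a ≠ 0) (hb : b ≠ 0) (j l : ℕ) :
    1 / b ^ (j + 1) - ∑ m ∈ range (l + 1), ((j + m).choose m : 𝕜) * (a - b) ^ m / a ^ (j + 1 + m) =
      ((a - b) / a) ^ (l + 1) / b ^ (j + 1) *
        ∑ i ∈ range (j + 1), ((l + i).choose i : 𝕜) * (b / a) ^ i := by
  have hpoints := pow_mul_sum_choose_add_pow_mul_sum_choose
    (x := b / a) (y := (a - b) / a) (by field_simp; ring) j l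
  have hterm (m : ℕ) : ((j + m).choose m : 𝕜) * (a - b) ^ m / a ^ (j + 1 + m) =
      1 / b ^ (j + 1) * ((b / a) ^ (j + 1) * (((j + m).choose m : 𝕜) * ((a - b) / a) ^ m)) := by
    rw [div_pow, div_pow]
    field_simp
    ring
  rw [sum_congr rfl fun m _ => hterm m, ← mul_sum, ← mul_sum, eq_sub_of_add_eq hpoints]
  ring

theorem one_div_pow_mul_pow_eq_sum_range {a b : 𝕜} (ha : a ≠ 0) (hb : b ≠ 0) (hab : a ≠ b)
    {N K : ℕ} (hN : 0 < N) (hK : 0 < K) :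
    1 / (a ^ N * b ^ K) =
      ∑ n ∈ range K, ((N + n - 1).choose n : 𝕜) / ((-(a - b)) ^ n * (a - b) ^ N) *
        (1 / b ^ (K - n) -
          ∑ m ∈ range (N + n), ((K - n - 1 + m).choose m : 𝕜) * (a - b) ^ m / a ^ (K - n + m)) := by
  obtain ⟨ν, rfl⟩ : ∃ ν, N = ν + 1 := ⟨N - 1, by omega⟩
  conv_lhs => rw [one_div, ← mul_one (_ ⁻¹),
    ← sum_range_sum_range_neg_one_pow_mul_choose_mul_choose ν hK (b / a), mul_sum]
  refine sum_congr rfl fun n hn => ?_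
  obtain ⟨j, rfl⟩ : ∃ j, K = n + (j + 1) := ⟨K - n - 1, by have := mem_range.mp hn; omega⟩
  rw [Nat.add_sub_cancel_left, show ν + 1 + n - 1 = ν + n by omega,
    show ν + 1 + n = ν + n + 1 by omega, show j + 1 - 1 = j by omega,
    one_div_pow_sub_sum_choose_mul_div_pow ha hb, mul_sum, mul_sum, mul_sum]
  refine sum_congr rfl fun i _ => ?_
  push_cast
  rw [neg_pow (a - b)]
  simp only [div_pow]
  rcases neg_one_pow_eq_or 𝕜 n with hsign | hsign <;> rw [hsign] <;>
    field_simp [sub_ne_zero.mpr hab] <;> ring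

end Field

theorem mgf_id_gammaMeasure {a r t : ℝ} (ha : 0 < a) (hr : 0 < r) (ht : t < r) :
    mgf id (gammaMeasure a r) t = (r / (r - t)) ^ a := by
  have hrt : 0 < r - t := sub_pos.mpr ht
  have hdensity (x : ℝ) (hx : 0 < x) : gammaPDFReal a r x * exp (t * x) =
      r ^ a / Gamma a * (x ^ (a - 1) * exp (-((r - t) * x))) := by
    rw [gammaPDFReal, if_pos hx.le, mul_assoc, mul_assoc, ← exp_add]
    ring_nf
  rw [mgf, gammaMeasure, integral_withDensity_eq_integral_toReal_smul (f := gammaPDF a r)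
    (measurable_gammaPDFReal a r).ennreal_ofReal (ae_of_all _ fun _ => ENNReal.ofReal_lt_top)]
  simp only [gammaPDF, ENNReal.toReal_ofReal (gammaPDFReal_nonneg ha hr _), smul_eq_mul, id]
  rw [← setIntegral_eq_integral_of_forall_compl_eq_zero (s := Set.Ici 0) fun x hx => by
      rw [gammaPDFReal, if_neg (by exact hx), zero_mul],
    integral_Ici_eq_integral_Ioi, setIntegral_congr_fun measurableSet_Ioi hdensity,
    integral_const_mul, integral_rpow_mul_exp_neg_mul_Ioi ha hrt, div_rpow hr.le hrt.le, one_div,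
    inv_rpow hrt.le]
  field_simp [(Gamma_pos_of_pos ha).ne']

theorem ProbabilityTheory.IndepFun.mgf_add_of_map_eq_gammaMeasure {Ω : Type*}
    [MeasurableSpace Ω] {P : Measure Ω} {X Y : Ω → ℝ} (hXY : IndepFun X Y P)
    (hX : AEMeasurable X P) (hY : AEMeasurable Y P) {a r b s t : ℝ} (ha : 0 < a) (hr : 0 < r)
    (hb : 0 < b) (hs : 0 < s) (htr : t < r) (hts : t < s) (hXlaw : P.map X = gammaMeasure a r)
    (hYlaw : P.map Y = gammaMeasure b s) :
    mgf (X + Y) P t = (r / (r - t)) ^ a * (s / (s - t)) ^ b := by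
  rw [hXY.mgf_add' hX.aestronglyMeasurable hY.aestronglyMeasurable, ← mgf_id_map hX,
    ← mgf_id_map hY, hXlaw, hYlaw, mgf_id_gammaMeasure ha hr htr, mgf_id_gammaMeasure hb hs hts]

theorem laplace_sum_gamma_Ps_lt_Pn_general
    {Ω : Type*} [MeasurableSpace Ω] (P : Measure Ω)
    (N M : ℕ) (hN : 1 ≤ N) (hM : N < M)
    (Ps Pn : ℝ) (hPs : 0 < Ps) (hPsPn : Ps < Pn)
    (ζ : ℝ) (hζ : ζ = (Pn - Ps) / (Ps * Pn))
    (X Y : Ω → ℝ) (hX : Measurable X) (hY : Measurable Y)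
    (hIndep : IndepFun X Y P)
    (hXlaw : P.map X = gammaMeasure (N : ℝ) Ps⁻¹)
    (hYlaw : P.map Y = gammaMeasure ((M : ℝ) - N) Pn⁻¹)
    (c : ℝ) (hc : 0 < c)
    (τ₁ τ₂ : ℝ) (hτ₁ : τ₁ = Ps⁻¹ + c) (hτ₂ : τ₂ = Pn⁻¹ + c) :
    ∫ ω, Real.exp (-(c * (X ω + Y ω))) ∂P =
      ∑ n ∈ Finset.range (M - N),
        (((N + n - 1).choose n : ℝ) * Pn ^ (2 * (N : ℤ) - M) /
            ((-ζ) ^ n * (Pn - Ps) ^ N)) *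
          (1 / τ₂ ^ (M - N - n) -
            ∑ m ∈ Finset.range (N + n),
              ((M - N - n - 1 + m).choose m : ℝ) * ζ ^ m / τ₁ ^ (M - N - n + m)) := by
  have hPn : 0 < Pn := hPs.trans hPsPn
  have hτ₁pos : 0 < τ₁ := hτ₁ ▸ by positivity
  have hτ₂pos : 0 < τ₂ := hτ₂ ▸ by positivity
  have hζpos : 0 < ζ := hζ ▸ div_pos (sub_pos.mpr hPsPn) (by positivity)
  have hζτ : τ₁ - τ₂ = ζ := by
    rw [hζ, hτ₁, hτ₂]
    field_simp
    ring
  have hMN : ((M - N : ℕ) : ℝ) = (M : ℝ) - N := Nat.cast_sub hM.le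
  have hlaplace : ∫ ω, exp (-(c * (X ω + Y ω))) ∂P = (Ps⁻¹ / τ₁) ^ N * (Pn⁻¹ / τ₂) ^ (M - N) := by
    have h := hIndep.mgf_add_of_map_eq_gammaMeasure hX.aemeasurable hY.aemeasurable
      (t := -c) (by positivity) (by positivity) (by rw [← hMN]; exact_mod_cast Nat.sub_pos_of_lt hM)
      (by positivity) (by linarith [inv_pos.mpr hPs]) (by linarith [inv_pos.mpr hPn]) hXlaw hYlaw
    rw [← hMN, rpow_natCast, rpow_natCast, sub_neg_eq_add, sub_neg_eq_add, ← hτ₁, ← hτ₂] at h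
    simpa [mgf, neg_mul] using h
  have hcoeff : Pn ^ (2 * (N : ℤ) - M) / (Pn - Ps) ^ N = Ps⁻¹ ^ N * Pn⁻¹ ^ (M - N) / ζ ^ N := by
    have hz : 2 * (N : ℤ) - M = (N : ℤ) - ((M - N : ℕ) : ℤ) := by push_cast [hM.le]; ring
    have hdiff : Pn - Ps = ζ * (Ps * Pn) := by
      rw [hζ]
      field_simp
    rw [hz, zpow_sub₀ hPn.ne', zpow_natCast, zpow_natCast, hdiff, inv_pow, inv_pow]
    field_simp
    ring
  rw [hlaplace, div_pow, div_pow, div_mul_div_comm, div_eq_mul_one_div _ (τ₁ ^ N * τ₂ ^ (M - N)),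
    one_div_pow_mul_pow_eq_sum_range hτ₁pos.ne' hτ₂pos.ne' (sub_ne_zero.mp (hζτ ▸ hζpos.ne'))
      (by omega) (by omega), hζτ, mul_sum]
  refine sum_congr rfl fun n _ => ?_
  rw [mul_div_mul_comm, hcoeff]
  ring

/-- Lemma 2 of the paper, case `0 < φ < N/M` (i.e. `P_s < P_n`): Laplace transform
`E[e^(-c(X+Y))]` of the sum of the independent signal gain `X ~ Gamma(N, P_s)` and
AN gain `Y ~ Gamma(M-N, P_n)` (shape/scale convention, i.e. rates `P_s⁻¹`, `P_n⁻¹`). -/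
theorem laplace_sum_gamma_Ps_lt_Pn
    {Ω : Type*} [MeasurableSpace Ω] (P : Measure Ω) [IsProbabilityMeasure P]
    (N M : ℕ) (hN : 1 ≤ N) (hM : N < M)
    (Ps Pn : ℝ) (hPs : 0 < Ps) (hPsPn : Ps < Pn)
    (ζ : ℝ) (hζ : ζ = (Pn - Ps) / (Ps * Pn))
    (X Y : Ω → ℝ) (hX : Measurable X) (hY : Measurable Y)
    (hIndep : IndepFun X Y P)
    (hXlaw : P.map X = gammaMeasure (N : ℝ) Ps⁻¹)
    (hYlaw : P.map Y = gammaMeasure ((M : ℝ) - N) Pn⁻¹)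
    (c : ℝ) (hc : 0 < c)
    (τ₁ τ₂ : ℝ) (hτ₁ : τ₁ = Ps⁻¹ + c) (hτ₂ : τ₂ = Pn⁻¹ + c) :
    ∫ ω, Real.exp (-(c * (X ω + Y ω))) ∂P =
      ∑ n ∈ Finset.range (M - N),
        (((N + n - 1).choose n : ℝ) * Pn ^ (2 * (N : ℤ) - M) /
            ((-ζ) ^ n * (Pn - Ps) ^ N)) *
          (1 / τ₂ ^ (M - N - n) -
            ∑ m ∈ Finset.range (N + n),
              ((M - N - n - 1 + m).choose m : ℝ) * ζ ^ m / τ₁ ^ (M - N - n + m)) :=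
  laplace_sum_gamma_Ps_lt_Pn_general P N M hN hM Ps Pn hPs hPsPn ζ hζ X Y hX hY hIndep hXlaw hYlaw c
    hc τ₁ τ₂ hτ₁ hτ₂
end

section
/- Let d > 0 and λ_p > 0 be reals and set K̄ = λ_p π d². Define V(r) = 2π d² − 2 d² arccos( r/(2d) ) + r √( d² − r²/4 ) for d ≤ r < 2d and V(r) = 2π d² for r ≥ 2d, and define P_r(r) = (2 / (λ_p V(r) − K̄)) · [ 1 − K̄ (1 − e^{−λ_p V(r)}) / ( λ_p V(r) (1 − e^{−K̄}) ) ] for d ≤ r < 2d and P_r(r) = (1 − e^{−K̄}) / K̄ for r ≥ 2d. Then lim_{ρ → ∞} (1/(π ρ²)) · ( 2π λ_p ∫_d^ρ P_r(r) r dr + 1 ) = λ_p (1 − e^{−K̄}) / K̄ = (1 − e^{−K̄}) / (π d²). -/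
/-!
Beyond `r = 2d` the retention probability is the constant `c = (1 − e^{−K̄})/K̄`, so for
`ρ ≥ 2d` the integral `∫_d^ρ Pr(r) r dr` is a constant plus `c ρ² / 2`; after division by
`π ρ²` only `λ_p c` survives. The only analytic input is integrability of `Pr(r) r` on
`[d, 2d]`, which holds because there `λ_p V(r) > K̄`, so the formula for `Pr` is continuous.
-/

open Real Filter MeasureTheory intervalIntegral Set

theorem tendsto_intervalIntegral_div_sq_of_eq_const_mul {f : ℝ → ℝ} {a b c : ℝ}
    (hf : IntervalIntegrable f volume a b) (hlin : ∀ r, b ≤ r → f r = c * r) :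
    Tendsto (fun ρ => (∫ r in a..ρ, f r) / ρ ^ 2) atTop (nhds (c / 2)) := by
  set A := ∫ r in a..b, f r
  have hsplit : ∀ ρ, b ≤ ρ → ∫ r in a..ρ, f r = A + c * (ρ ^ 2 - b ^ 2) / 2 := by
    intro ρ hρ
    have heq : EqOn f (fun r => c * r) (uIcc b ρ) := fun r hr =>
      hlin r (uIcc_of_le hρ ▸ hr).1
    have htail : IntervalIntegrable f volume b ρ :=
      ((continuous_const.mul continuous_id).intervalIntegrable b ρ).congr
        (heq.symm.mono uIoc_subset_uIcc)
    rw [← integral_add_adjacent_intervals hf htail, integral_congr heq, intervalIntegral.integral_const_mul,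
      integral_id]
    ring
  have hlim : Tendsto (fun ρ : ℝ => c / 2 + (A - c * b ^ 2 / 2) * (ρ ^ 2)⁻¹) atTop
      (nhds (c / 2 + (A - c * b ^ 2 / 2) * 0)) :=
    tendsto_const_nhds.add <| (tendsto_inv_atTop_zero.comp
      (tendsto_pow_atTop two_ne_zero)).const_mul _
  rw [mul_zero, add_zero] at hlim
  refine hlim.congr' ?_
  filter_upwards [eventually_ge_atTop b, eventually_gt_atTop 0] with ρ hbρ hρ
  rw [hsplit ρ hbρ]
  field_simp
  ring

/-- `V(r)` on `[d, 2d]`: the area of the union of two discs of radius `d` at distance `r`. -/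
noncomputable def unionArea (d r : ℝ) : ℝ :=
  2 * π * d ^ 2 - 2 * d ^ 2 * arccos (r / (2 * d)) + r * √(d ^ 2 - r ^ 2 / 4)

/-- Lemma 1's retention probability as a function of `x = λ_p V(r)`. -/
noncomputable def maternRetention (K x : ℝ) : ℝ :=
  (2 / (x - K)) * (1 - K * (1 - exp (-x)) / (x * (1 - exp (-K))))

theorem continuous_unionArea (d : ℝ) : Continuous (unionArea d) := by
  unfold unionArea
  fun_prop

theorem pi_mul_sq_lt_unionArea {d r : ℝ} (hd : 0 < d) (hr : 0 < r) :
    π * d ^ 2 < unionArea d r := by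
  have harccos : arccos (r / (2 * d)) < π / 2 := arccos_lt_pi_div_two.mpr (by positivity)
  have hsqrt : 0 ≤ r * √(d ^ 2 - r ^ 2 / 4) := by positivity
  have hd2 : 0 < d ^ 2 := by positivity
  unfold unionArea
  nlinarith

theorem continuousOn_maternRetention {K : ℝ} (hK : 0 < K) :
    ContinuousOn (maternRetention K) (Ioi K) := by
  have hexpK : 1 - exp (-K) ≠ 0 := (sub_pos.mpr (exp_lt_one_iff.mpr (neg_neg_of_pos hK))).ne'
  intro x hx
  have hxK : x - K ≠ 0 := sub_ne_zero.mpr (ne_of_gt hx)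
  have hx0 : x * (1 - exp (-K)) ≠ 0 := mul_ne_zero (by linarith [mem_Ioi.mp hx]) hexpK
  unfold maternRetention
  exact (continuousAt_const.div (continuousAt_id.sub continuousAt_const) hxK).mul
    (continuousAt_const.sub ((by fun_prop : ContinuousAt (fun x => K * (1 - exp (-x))) x).div
      (by fun_prop) hx0)) |>.continuousWithinAt

theorem matern_density_limit_general
    (d lamp : ℝ) (hd : 0 < d) (hlamp : 0 < lamp)
    (K : ℝ) (hK : K = lamp * Real.pi * d ^ 2)
    (V Pr : ℝ → ℝ)
    (hV₁ : ∀ r, d ≤ r → r < 2 * d →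
      V r = 2 * Real.pi * d ^ 2 - 2 * d ^ 2 * Real.arccos (r / (2 * d)) +
        r * Real.sqrt (d ^ 2 - r ^ 2 / 4))
    (hPr₁ : ∀ r, d ≤ r → r < 2 * d →
      Pr r = (2 / (lamp * V r - K)) *
        (1 - K * (1 - Real.exp (-(lamp * V r))) /
          (lamp * V r * (1 - Real.exp (-K)))))
    (hPr₂ : ∀ r, 2 * d ≤ r → Pr r = (1 - Real.exp (-K)) / K) :
    Tendsto (fun ρ : ℝ =>
        (1 / (Real.pi * ρ ^ 2)) * (2 * Real.pi * lamp * (∫ r in d..ρ, Pr r * r) + 1))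
      atTop (nhds (lamp * (1 - Real.exp (-K)) / K)) ∧
    lamp * (1 - Real.exp (-K)) / K = (1 - Real.exp (-K)) / (Real.pi * d ^ 2) := by
  have hK0 : 0 < K := by rw [hK]; positivity
  have hmaps : MapsTo (fun r => lamp * unionArea d r) (Icc d (2 * d)) (Ioi K) := fun r hr => by
    have := mul_lt_mul_of_pos_left (pi_mul_sq_lt_unionArea hd (hd.trans_le hr.1)) hlamp
    rw [mem_Ioi, hK]
    linarith
  have hcont : ContinuousOn (fun r => maternRetention K (lamp * unionArea d r) * r)
      (Icc d (2 * d)) :=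
    ((continuousOn_maternRetention hK0).comp
      (continuous_const.mul (continuous_unionArea d)).continuousOn hmaps).mul continuousOn_id
  have hint : IntervalIntegrable (fun r => Pr r * r) volume d (2 * d) := by
    refine (hcont.intervalIntegrable_of_Icc (by linarith)).congr_uIoo fun r hr => ?_
    rw [uIoo_of_le (by linarith)] at hr
    simp only [hPr₁ r hr.1.le hr.2, hV₁ r hr.1.le hr.2, maternRetention, unionArea]
  have hlim := tendsto_intervalIntegral_div_sq_of_eq_const_mul hint fun r hr => by
    rw [hPr₂ r hr]
  have hsum := ((hlim.const_mul (2 * lamp)).add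
    (tendsto_inv_atTop_zero.comp ((tendsto_pow_atTop two_ne_zero).const_mul_atTop pi_pos)))
  refine ⟨?_, by rw [hK]; field_simp⟩
  convert hsum.congr' ?_ using 2
  · ring
  filter_upwards [eventually_gt_atTop 0] with ρ hρ
  simp only [Function.comp_apply]
  field_simp

/-- The computational core of Theorem 3 (network secrecy throughput): with the Matérn
retention probability `Pr` (from Lemma 1) built from the union area `V`,
`lim_{ρ→∞} (1/(πρ²)) (2π λ_p ∫_d^ρ Pr(r) r dr + 1) = λ_p (1 − e^(−K̄))/K̄
 = (1 − e^(−K̄))/(π d²)`, where `K̄ = λ_p π d²`. -/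
theorem matern_density_limit
    (d lamp : ℝ) (hd : 0 < d) (hlamp : 0 < lamp)
    (K : ℝ) (hK : K = lamp * Real.pi * d ^ 2)
    (V Pr : ℝ → ℝ)
    (hV₁ : ∀ r, d ≤ r → r < 2 * d →
      V r = 2 * Real.pi * d ^ 2 - 2 * d ^ 2 * Real.arccos (r / (2 * d)) +
        r * Real.sqrt (d ^ 2 - r ^ 2 / 4))
    (hV₂ : ∀ r, 2 * d ≤ r → V r = 2 * Real.pi * d ^ 2)
    (hPr₁ : ∀ r, d ≤ r → r < 2 * d →
      Pr r = (2 / (lamp * V r - K)) *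
        (1 - K * (1 - Real.exp (-(lamp * V r))) /
          (lamp * V r * (1 - Real.exp (-K)))))
    (hPr₂ : ∀ r, 2 * d ≤ r → Pr r = (1 - Real.exp (-K)) / K) :
    Tendsto (fun ρ : ℝ =>
        (1 / (Real.pi * ρ ^ 2)) * (2 * Real.pi * lamp * (∫ r in d..ρ, Pr r * r) + 1))
      atTop (nhds (lamp * (1 - Real.exp (-K)) / K)) ∧
    lamp * (1 - Real.exp (-K)) / K = (1 - Real.exp (-K)) / (Real.pi * d ^ 2) :=
  matern_density_limit_general d lamp hd hlamp K hK V Pr hV₁ hPr₁ hPr₂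
end
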